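/- In the construction with partial knot K̂ and tangle T, the word ℓ = ℓ₋ · ℓ₊ representing the preferred longitude of K, where ℓ₊ = w₁* w₂* ⋯ w_i* S₊ w_{i+1}* ⋯ w_m* and ℓ₋ = w_m ⋯ w_{i+1} S₋ w_i ⋯ w₂ w₁, satisfies φ(ℓ) = 1 for the epimorphism φ: G(K) → G(K̂) of the construction, since φ(w_k w_k*) = 1 for every k and φ(S₊) = φ(S₋) = 1. -/

import Mathlib

/-!
Collapsing every `x_i*` onto `x_i` and every tangle arc onto `x_b` is already a homomorphism of
free groups, and `φ` factors through it. In the free group the collapse sends each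
`w_k w_k*` and each `s_j^{±1} s_k^{∓1}` to `1`, so `ℓ₊` collapses to the inverse of `ℓ₋`.
-/

/-- The Wirtinger generators of the knot `K` of the construction: the arcs
`x_1, …, x_m` of the diagram `D`, the arcs `x_1*, …, x_m*` of the reflected
diagram `D*`, and the arcs `s_1, …, s_n` of the tangle `T`. -/
abbrev WirtGen (m n : ℕ) := Fin m ⊕ Fin m ⊕ Fin n

/-- The map on Wirtinger generators: `x_i ↦ x̂_i`, `x_i* ↦ x̂_i`, `s_i ↦ x̂_b`
(for the fixed generator index `b`). -/
def genMap (m n : ℕ) (b : Fin m) : WirtGen m n → Fin m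
  | Sum.inl i => i
  | Sum.inr (Sum.inl i) => i
  | Sum.inr (Sum.inr _) => b

/-- The words of the form `s_j s_k⁻¹` or `s_j⁻¹ s_k` in the tangle
generators; the words `S₊` and `S₋` are products of such words. -/
def tangleWords (m n : ℕ) : Set (FreeGroup (WirtGen m n)) :=
  {u | ∃ j k : Fin n,
    u = FreeGroup.of (Sum.inr (Sum.inr j) : WirtGen m n)
          * (FreeGroup.of (Sum.inr (Sum.inr k) : WirtGen m n))⁻¹ ∨
    u = (FreeGroup.of (Sum.inr (Sum.inr j) : WirtGen m n))⁻¹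
          * FreeGroup.of (Sum.inr (Sum.inr k) : WirtGen m n)}

abbrev collapse (m n : ℕ) (b : Fin m) : FreeGroup (WirtGen m n) →* FreeGroup (Fin m) :=
  FreeGroup.map (genMap m n b)

theorem comp_mk_eq_mk_comp_collapse {m n : ℕ} {b : Fin m}
    {R : Set (FreeGroup (WirtGen m n))} {Rhat : Set (FreeGroup (Fin m))}
    (φ : PresentedGroup R →* PresentedGroup Rhat)
    (hφ : ∀ g : WirtGen m n, φ (PresentedGroup.of g) = PresentedGroup.of (genMap m n b g)) :
    φ.comp (PresentedGroup.mk R) = (PresentedGroup.mk Rhat).comp (collapse m n b) :=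
  FreeGroup.ext_hom _ _ hφ

theorem collapse_inv_mul_mul_inv_mul {m n : ℕ} (b x y : Fin m) :
    collapse m n b ((FreeGroup.of (Sum.inl x))⁻¹ * FreeGroup.of (Sum.inl y)
      * ((FreeGroup.of (Sum.inr (Sum.inl y)))⁻¹ * FreeGroup.of (Sum.inr (Sum.inl x)))) = 1 := by
  simp [genMap, mul_assoc]

theorem collapse_mul_inv_mul_mul_inv {m n : ℕ} (b x y : Fin m) :
    collapse m n b (FreeGroup.of (Sum.inl x) * (FreeGroup.of (Sum.inl y))⁻¹
      * (FreeGroup.of (Sum.inr (Sum.inl y)) * (FreeGroup.of (Sum.inr (Sum.inl x)))⁻¹)) = 1 := by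
  simp [genMap, mul_assoc]

theorem tangleWords_subset_mker_collapse (m n : ℕ) (b : Fin m) :
    tangleWords m n ⊆ MonoidHom.mker (collapse m n b) := by
  rintro u ⟨j, k, rfl | rfl⟩ <;> simp [genMap]

theorem collapse_eq_one_of_mem_closure_tangleWords {m n : ℕ} (b : Fin m)
    {u : FreeGroup (WirtGen m n)} (hu : u ∈ Submonoid.closure (tangleWords m n)) :
    collapse m n b u = 1 :=
  Submonoid.closure_le.mpr (tangleWords_subset_mker_collapse m n b) hu

theorem List.reverse_prod_mul_prod_eq_one_of_forall_mul_eq_one {G : Type*} [Group G] {m : ℕ}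
    {f g : Fin m → G} (hfg : ∀ k, f k * g k = 1) :
    (List.ofFn f).reverse.prod * (List.ofFn g).prod = 1 := by
  have hg : g = fun k => (f k)⁻¹ := funext fun k => eq_inv_of_mul_eq_one_right (hfg k)
  rw [hg, ← Function.comp_def, ← List.map_ofFn, List.prod_reverse_noncomm, inv_mul_cancel]

theorem map_longitude_eq_one {G H : Type*} [Group G] [Group H] (ψ : G →* H) {m : ℕ}
    {w wstar : Fin m → G} (hw : ∀ k, ψ (w k * wstar k) = 1) {Splus Sminus : G}
    (hSplus : ψ Splus = 1) (hSminus : ψ Sminus = 1) (i₀ : ℕ) :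
    ψ ((((List.ofFn w).drop i₀).reverse.prod * Sminus * ((List.ofFn w).take i₀).reverse.prod)
      * (((List.ofFn wstar).take i₀).prod * Splus * ((List.ofFn wstar).drop i₀).prod)) = 1 := by
  have hψ : ∀ k, ψ (w k) * ψ (wstar k) = 1 := fun k => by rw [← map_mul, hw k]
  simp only [map_mul, hSplus, hSminus, mul_one, map_list_prod, List.map_reverse, List.map_drop,
    List.map_take, List.map_ofFn]
  calc _ = ((List.ofFn (ψ ∘ w)).take i₀ ++ (List.ofFn (ψ ∘ w)).drop i₀).reverse.prod
          * ((List.ofFn (ψ ∘ wstar)).take i₀ ++ (List.ofFn (ψ ∘ wstar)).drop i₀).prod := by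
        simp only [List.reverse_append, List.prod_append, mul_assoc]
    _ = (List.ofFn (ψ ∘ w)).reverse.prod * (List.ofFn (ψ ∘ wstar)).prod := by
        simp only [List.take_append_drop]
    _ = 1 := List.reverse_prod_mul_prod_eq_one_of_forall_mul_eq_one hψ

/-- In the construction with partial knot `K̂` and tangle `T`, the word
`ℓ = ℓ₋ · ℓ₊` representing the preferred longitude of `K`, where
`ℓ₊ = w₁* w₂* ⋯ w_{i₀}* S₊ w_{i₀+1}* ⋯ w_m*` and
`ℓ₋ = w_m ⋯ w_{i₀+1} S₋ w_{i₀} ⋯ w₂ w₁`, each pair `(w_k, w_k*)` being of the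
form `(x⁻¹y, (y*)⁻¹x*)` or `(xy⁻¹, y*(x*)⁻¹)` and `S₊`, `S₋` products of words
`s_j s_k⁻¹` or `s_j⁻¹ s_k`, satisfies `φ(ℓ) = 1` for the epimorphism
`φ : G(K) → G(K̂)` of the construction (the homomorphism of presented groups
sending `x_i, x_i* ↦ x̂_i` and `s_i ↦ x̂_b`), since `φ(w_k w_k*) = 1` for every
`k` and `φ(S₊) = φ(S₋) = 1`. -/
theorem longitude_maps_to_trivial (m n : ℕ) (b : Fin m) (i₀ : ℕ)
    (R : Set (FreeGroup (WirtGen m n))) (Rhat : Set (FreeGroup (Fin m)))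
    (w wstar : Fin m → FreeGroup (WirtGen m n))
    (hw : ∀ k : Fin m, ∃ x y : Fin m,
      (w k = (FreeGroup.of (Sum.inl x : WirtGen m n))⁻¹
              * FreeGroup.of (Sum.inl y : WirtGen m n) ∧
       wstar k = (FreeGroup.of (Sum.inr (Sum.inl y) : WirtGen m n))⁻¹
              * FreeGroup.of (Sum.inr (Sum.inl x) : WirtGen m n)) ∨
      (w k = FreeGroup.of (Sum.inl x : WirtGen m n)
              * (FreeGroup.of (Sum.inl y : WirtGen m n))⁻¹ ∧
       wstar k = FreeGroup.of (Sum.inr (Sum.inl y) : WirtGen m n)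
              * (FreeGroup.of (Sum.inr (Sum.inl x) : WirtGen m n))⁻¹))
    (Splus Sminus : FreeGroup (WirtGen m n))
    (hSplus : Splus ∈ Submonoid.closure (tangleWords m n))
    (hSminus : Sminus ∈ Submonoid.closure (tangleWords m n))
    (ℓplus ℓminus ℓ : FreeGroup (WirtGen m n))
    (hℓplus : ℓplus = ((List.ofFn wstar).take i₀).prod * Splus
        * ((List.ofFn wstar).drop i₀).prod)
    (hℓminus : ℓminus = ((List.ofFn w).drop i₀).reverse.prod * Sminus
        * ((List.ofFn w).take i₀).reverse.prod)
    (hℓ : ℓ = ℓminus * ℓplus)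
    -- the epimorphism of the construction
    (φ : PresentedGroup R →* PresentedGroup Rhat)
    (hφ : ∀ g : WirtGen m n,
      φ (PresentedGroup.of g) = PresentedGroup.of (genMap m n b g)) :
    (∀ k : Fin m, φ (PresentedGroup.mk R (w k * wstar k)) = 1) ∧
    φ (PresentedGroup.mk R Splus) = 1 ∧
    φ (PresentedGroup.mk R Sminus) = 1 ∧
    φ (PresentedGroup.mk R ℓ) = 1 := by
  have hφ_mk : ∀ u, φ (PresentedGroup.mk R u) = PresentedGroup.mk Rhat (collapse m n b u) :=
    fun u => DFunLike.congr_fun (comp_mk_eq_mk_comp_collapse φ hφ) u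
  have hpair : ∀ k, collapse m n b (w k * wstar k) = 1 := fun k => by
    obtain ⟨x, y, ⟨hwk, hwstark⟩ | ⟨hwk, hwstark⟩⟩ := hw k <;> rw [hwk, hwstark]
    · exact collapse_inv_mul_mul_inv_mul b x y
    · exact collapse_mul_inv_mul_mul_inv b x y
  have hSplus' := collapse_eq_one_of_mem_closure_tangleWords b hSplus
  have hSminus' := collapse_eq_one_of_mem_closure_tangleWords b hSminus
  have hℓ' : collapse m n b ℓ = 1 := by
    rw [hℓ, hℓminus, hℓplus]
    exact map_longitude_eq_one _ hpair hSplus' hSminus' i₀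
  simp only [hφ_mk, hpair, hSplus', hSminus', hℓ', map_one, implies_true, and_self]
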